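/- arXiv:2605.01198 — 2 statements merged into one kernel-verified Lean document; each statement's English description precedes it below -/
import Mathlib

section
/- Let M be a Markov kernel on X reversible with respect to a probability measure ν (i.e., ∫_B M(C; x) ν(dx) = ∫_C M(B; x) ν(dx) for all measurable B, C), and let A ⊆ X be measurable with ν(A) > 0. Define the constrained kernel M_A(dx; y) = M(dx; y) 1[x ∈ A] + M(Aᶜ; y) δ_y(dx) for y ∈ A. Then M_A is a Markov kernel on A that is reversible with respect to the conditional measure ν_A(B) = ν(B ∩ A)/ν(A). -/
open MeasureTheory ProbabilityTheory
open scoped ENNReal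

theorem stmt_1 {X : Type*} [MeasurableSpace X] (ν : Measure X) [IsProbabilityMeasure ν]
    (M : Kernel X X) [IsMarkovKernel M]
    (hrev : ∀ B C : Set X, MeasurableSet B → MeasurableSet C →
      ∫⁻ x in B, M x C ∂ν = ∫⁻ x in C, M x B ∂ν)
    (A : Set X) (hA : MeasurableSet A) (hApos : 0 < ν A)
    (MA : X → Set X → ℝ≥0∞)
    (hMA : ∀ y C, MA y C = M y (C ∩ A) + M y Aᶜ * Set.indicator C (fun _ => (1 : ℝ≥0∞)) y) :
    (∀ y ∈ A, MA y A = 1) ∧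
    (∀ B C : Set X, MeasurableSet B → MeasurableSet C → B ⊆ A → C ⊆ A →
      ∫⁻ y in B, MA y C ∂((ν A)⁻¹ • ν.restrict A) =
        ∫⁻ y in C, MA y B ∂((ν A)⁻¹ • ν.restrict A)) := by
  constructor
  · intro y hy
    rw [hMA, Set.inter_self, Set.indicator_of_mem hy, mul_one]
    have h1 : M y A + M y Aᶜ = M y Set.univ := by
      rw [← measure_union disjoint_compl_right hA.compl, Set.union_compl_self]
    rw [h1, measure_univ]
  · intro B C hB hC hBA hCA
    have hBA' : B ∩ A = B := Set.inter_eq_left.2 hBA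
    have hCA' : C ∩ A = C := Set.inter_eq_left.2 hCA
    -- a general identity for one term
    have hterm : ∀ (S T : Set X), MeasurableSet S → MeasurableSet T →
        ∫⁻ y in S, M y Aᶜ * Set.indicator T (fun _ => (1 : ℝ≥0∞)) y ∂ν
          = ∫⁻ y in S ∩ T, M y Aᶜ ∂ν := by
      intro S T hS hT
      have hpt : ∀ y, M y Aᶜ * Set.indicator T (fun _ => (1 : ℝ≥0∞)) y
          = Set.indicator T (fun y => M y Aᶜ) y := by
        intro y
        by_cases h : y ∈ T
        · simp [Set.indicator_of_mem h]
        · simp [Set.indicator_of_notMem h]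
      simp_rw [hpt]
      rw [lintegral_indicator hT, Measure.restrict_restrict hT, Set.inter_comm T S]
    have key : ∫⁻ y in B, MA y C ∂ν = ∫⁻ y in C, MA y B ∂ν := by
      simp_rw [hMA, hCA', hBA']
      rw [lintegral_add_left (M.measurable_coe hC),
        lintegral_add_left (M.measurable_coe hB),
        hrev B C hB hC, hterm B C hB hC, hterm C B hC hB, Set.inter_comm]
    have hres : ∀ (S : Set X), MeasurableSet S → S ⊆ A →
        (ν.restrict A).restrict S = ν.restrict S := by
      intro S hS hSA
      rw [Measure.restrict_restrict hS, Set.inter_eq_left.2 hSA]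
    calc ∫⁻ y in B, MA y C ∂((ν A)⁻¹ • ν.restrict A)
        = (ν A)⁻¹ * ∫⁻ y in B, MA y C ∂(ν.restrict A) := by
          rw [Measure.restrict_smul, lintegral_smul_measure, smul_eq_mul]
      _ = (ν A)⁻¹ * ∫⁻ y in B, MA y C ∂ν := by
          rw [show ∫⁻ y in B, MA y C ∂(ν.restrict A) = ∫⁻ y, MA y C ∂((ν.restrict A).restrict B) from rfl,
            hres B hB hBA]
      _ = (ν A)⁻¹ * ∫⁻ y in C, MA y B ∂ν := by rw [key]
      _ = (ν A)⁻¹ * ∫⁻ y in C, MA y B ∂(ν.restrict A) := by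
          rw [show ∫⁻ y in C, MA y B ∂(ν.restrict A) = ∫⁻ y, MA y B ∂((ν.restrict A).restrict C) from rfl,
            hres C hC hCA]
      _ = ∫⁻ y in C, MA y B ∂((ν A)⁻¹ • ν.restrict A) := by
          rw [Measure.restrict_smul, lintegral_smul_measure, smul_eq_mul]
end

section
/- Let π be a probability measure on X, h a π-integrable function, and ψ_1, …, ψ_L nonnegative measurable functions with ∑_{j=1}^L ψ_j(x) > 0 for every x and 0 < π(ψ_i) < ∞ for each i. Define the biased distributions π_i(dx) = ψ_i(x) π(dx) / π(ψ_i). Then the EMUS identity holds: π(h) = (∑_{i=1}^L π(ψ_i) π_i(h / ∑_j ψ_j)) / (∑_{i=1}^L π(ψ_i) π_i(1 / ∑_j ψ_j)). -/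
open MeasureTheory

theorem stmt_13 {X : Type*} [MeasurableSpace X] (π : Measure X) [IsProbabilityMeasure π]
    (h : X → ℝ) (hhmeas : Measurable h) (hhint : Integrable h π)
    (L : ℕ) (ψ : Fin L → X → ℝ)
    (hψmeas : ∀ i, Measurable (ψ i))
    (hψnonneg : ∀ i x, 0 ≤ ψ i x)
    (hψsum : ∀ x, 0 < ∑ j, ψ j x)
    (hψint : ∀ i, Integrable (ψ i) π)
    (hψpos : ∀ i, 0 < ∫ x, ψ i x ∂π) :
    ∫ x, h x ∂π =
      (∑ i, (∫ x, ψ i x ∂π) *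
        ((∫ x, (h x / ∑ j, ψ j x) * ψ i x ∂π) / (∫ x, ψ i x ∂π))) /
      (∑ i, (∫ x, ψ i x ∂π) *
        ((∫ x, (1 / ∑ j, ψ j x) * ψ i x ∂π) / (∫ x, ψ i x ∂π))) := by
  have hSmeas : Measurable fun x => ∑ j, ψ j x :=
    Finset.measurable_sum _ fun j _ => hψmeas j
  have hratio : ∀ i x, ψ i x / (∑ j, ψ j x) ≤ 1 := by
    intro i x
    rw [div_le_one (hψsum x)]
    exact Finset.single_le_sum (fun j _ => hψnonneg j x) (Finset.mem_univ i)
  -- integrability of (g x / S x) * ψ i x when g integrable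
  have hint : ∀ (g : X → ℝ), Measurable g → Integrable g π → ∀ i,
      Integrable (fun x => (g x / ∑ j, ψ j x) * ψ i x) π := by
    intro g hgm hgi i
    refine hgi.mono ?_ (Filter.Eventually.of_forall fun x => ?_)
    · exact (((hgm.div hSmeas).mul (hψmeas i))).aestronglyMeasurable
    · have : |(g x / ∑ j, ψ j x) * ψ i x| = |g x| * (ψ i x / ∑ j, ψ j x) := by
        rw [abs_mul, abs_div, abs_of_pos (hψsum x), abs_of_nonneg (hψnonneg i x)]
        ring
      rw [Real.norm_eq_abs, Real.norm_eq_abs, this]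
      calc |g x| * (ψ i x / ∑ j, ψ j x) ≤ |g x| * 1 :=
            mul_le_mul_of_nonneg_left (hratio i x) (abs_nonneg _)
        _ = |g x| := mul_one _
  have hsum : ∀ (g : X → ℝ), Measurable g → Integrable g π →
      (∑ i, (∫ x, ψ i x ∂π) *
        ((∫ x, (g x / ∑ j, ψ j x) * ψ i x ∂π) / (∫ x, ψ i x ∂π))) = ∫ x, g x ∂π := by
    intro g hgm hgi
    have : ∀ i, (∫ x, ψ i x ∂π) *
        ((∫ x, (g x / ∑ j, ψ j x) * ψ i x ∂π) / (∫ x, ψ i x ∂π)) =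
        ∫ x, (g x / ∑ j, ψ j x) * ψ i x ∂π := fun i =>
      mul_div_cancel₀ _ (ne_of_gt (hψpos i))
    rw [Finset.sum_congr rfl fun i _ => this i,
      ← integral_finset_sum _ fun i _ => hint g hgm hgi i]
    congr 1
    ext x
    rw [← Finset.mul_sum]
    exact div_mul_cancel₀ _ (hψsum x).ne'
  have h1 : (∑ i, (∫ x, ψ i x ∂π) *
      ((∫ x, (1 / ∑ j, ψ j x) * ψ i x ∂π) / (∫ x, ψ i x ∂π))) = 1 := by
    have := hsum (fun _ => 1) measurable_const (integrable_const 1)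
    simpa using this
  rw [h1, div_one, hsum h hhmeas hhint]
end
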